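/- Let d, k ≥ 2 and 1 ≤ i ≤ k. For C = (x_1,…,x_k) ∈ A_i set ε(C) = (1/k)·min{ |p(x_r) − p(x_s)| : p(x_r) ≠ p(x_s) } if i ≥ 2 and ε(C) = 1 if i = 1, and define D^i(C,t) = (z_1(C,t),…,z_k(C,t)) with z_j(C,t) = x_j + t(j−1)ε(C)e_1 if i < k, and D^k(C,t) = C. Then D^i : A_i × [0,1] → F(ℝ^d,k) is well defined (collision-free for all t) and continuous, D^i(C,0) = C, and D^i(C,1) ∈ A_k; that is, D^i is a continuous deformation of A_i into A_k inside F(ℝ^d,k). -/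

import Mathlib

open unitInterval

noncomputable section

/-- Euclidean space ℝ^d. -/
abbrev E (d : ℕ) : Type := EuclideanSpace ℝ (Fin d)

/-- The ordered configuration space F(ℝ^d, k) of k distinct points in ℝ^d,
viewed as the subspace of (ℝ^d)^k of injective tuples. -/
def Conf (d k : ℕ) : Set (Fin k → E d) := {x | Function.Injective x}

/-- The time i/(n-1) ∈ [0,1] at which the i-th configuration is visited. -/
def eTime (n : ℕ) (i : Fin n) : unitInterval :=
  Set.projIcc 0 1 zero_le_one ((i : ℝ) / ((n : ℝ) - 1))

/-- The evaluation map e_n : P(X) → X^n,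
e_n(γ) = (γ(0), γ(1/(n-1)), …, γ((n-2)/(n-1)), γ(1)). -/
def evalMap {X : Type*} [TopologicalSpace X] (n : ℕ) (γ : C(unitInterval, X)) : Fin n → X :=
  fun i => γ (eTime n i)

/-- `A ⊆ X^n` admits a continuous section of the evaluation map e_n. -/
def HasSec {X : Type*} [TopologicalSpace X] (n : ℕ) (A : Set (Fin n → X)) : Prop :=
  ∃ s : A → C(unitInterval, X), Continuous s ∧ ∀ a : A, evalMap n (s a) = (a : Fin n → X)

/-- The first standard basis vector e_1 of ℝ^d. -/
def e1v (d : ℕ) (hd : 2 ≤ d) : E d := EuclideanSpace.single ⟨0, by omega⟩ (1 : ℝ)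

/-- The projection p : ℝ^d → ℝ^d onto the first coordinate axis. -/
def projL {d : ℕ} (x : E d) : E d :=
  (WithLp.equiv 2 (Fin d → ℝ)).symm fun j => if (j : ℕ) = 0 then x j else 0

/-- cp(C) = cardinality of {p(x_1),…,p(x_k)}. -/
def cp {d k : ℕ} (C : Fin k → E d) : ℕ := (Set.range fun i => projL (C i)).ncard

/-- The set A_i of configurations C ∈ F(ℝ^d,k) with cp(C) = i. -/
def Abig (d k i : ℕ) : Set (Fin k → E d) := {C | C ∈ Conf d k ∧ cp C = i}

/-- ε(C): for cp(C) ≥ 2, (1/k)·min{|p(x_r) - p(x_s)| : p(x_r) ≠ p(x_s)};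
for cp(C) = 1, ε(C) = 1. -/
def eps {d k : ℕ} (C : Fin k → E d) : ℝ :=
  if 2 ≤ cp C then
    (1 / (k : ℝ)) *
      sInf {r : ℝ | ∃ a b : Fin k, projL (C a) ≠ projL (C b) ∧ r = ‖projL (C a) - projL (C b)‖}
  else 1

/-- The desingularization D^i: for i < k, D^i(C,t) has components
z_j(C,t) = x_j + t(j-1)ε(C)e_1 (the paper index j ∈ {1,…,k} corresponds to
(j:ℕ)+1 for j : Fin k, so the multiplier j-1 is (j:ℕ)); for i = k, D^k(C,t) = C. -/
def Ddef {d k : ℕ} (hd : 2 ≤ d) (i : ℕ) (C : Fin k → E d) (t : ℝ) : Fin k → E d :=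
  if i < k then fun j => C j + (t * (j : ℝ) * eps C) • e1v d hd else C

/-!
Everything happens on the first coordinate axis. Two points whose projections differ are at
least `k ε` apart there, while the shifts `t (j - 1) ε` of two points differ by at most
`(k - 1) ε < k ε`; so for `t ∈ [0, 1]` the shifts never create a collision, and at `t = 1` they
separate the points that had equal projections. Continuity reduces to that of `ε` on `A_i`: near
`C₀ ∈ A_i`, separated projections stay separated and the number `i` of distinct projections is
fixed, so the same pairs are separated and `ε` is a minimum of the same finitely many continuous
gaps.
-/

open Function Filter Topology Set

/-- The factorization `g = φ ∘ f` maps `range f` onto `range g`, so equal cardinalities force `φ`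
to be injective there. -/
theorem Function.FactorsThrough.symm_of_ncard_range_eq {α β γ : Type*} [Finite α]
    {f : α → β} {g : α → γ} (hgf : g.FactorsThrough f) (hcard : (range g).ncard = (range f).ncard) :
    f.FactorsThrough g := by
  intro a b hab
  have hinj : InjOn (extend f g fun _ => g a) (range f) :=
    injOn_of_ncard_image_eq (by rw [← range_comp, hgf.extend_comp, hcard])
  refine hinj (mem_range_self a) (mem_range_self b) ?_
  rw [hgf.extend_apply, hgf.extend_apply, hab]

section Desingularization

variable {d k : ℕ}

@[fun_prop]
lemma continuous_projL : Continuous (projL : E d → E d) := by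
  refine (PiLp.continuous_toLp 2 _).comp (continuous_pi fun j => ?_)
  split_ifs
  · exact (continuous_apply j).comp (PiLp.continuous_ofLp 2 _)
  · exact continuous_const

lemma projL_add_smul_e1v (hd : 2 ≤ d) (x : E d) (c : ℝ) :
    projL (x + c • e1v d hd) = projL x + c • e1v d hd := by
  ext j
  by_cases hj : (j : ℕ) = 0 <;> simp [projL, e1v, hj, Fin.ext_iff]

lemma norm_e1v (hd : 2 ≤ d) : ‖e1v d hd‖ = 1 := by
  simp [e1v]

lemma e1v_ne_zero (hd : 2 ≤ d) : e1v d hd ≠ 0 :=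
  norm_ne_zero_iff.1 (by simp [norm_e1v])

lemma two_le_cp_iff {C : Fin k → E d} : 2 ≤ cp C ↔ ∃ a b, projL (C a) ≠ projL (C b) := by
  change 1 < (range _).ncard ↔ _
  rw [one_lt_ncard_iff (finite_range _)]
  simp

open Classical in
def sepPairs (C : Fin k → E d) : Finset (Fin k × Fin k) :=
  {p | projL (C p.1) ≠ projL (C p.2)}

lemma mem_sepPairs {C : Fin k → E d} {p : Fin k × Fin k} :
    p ∈ sepPairs C ↔ projL (C p.1) ≠ projL (C p.2) := by
  simp [sepPairs]

lemma sepPairs_nonempty_iff {C : Fin k → E d} : (sepPairs C).Nonempty ↔ 2 ≤ cp C := by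
  simp [Finset.Nonempty, mem_sepPairs, two_le_cp_iff]

lemma eps_eq_inf' {C : Fin k → E d} (h : (sepPairs C).Nonempty) :
    eps C = (k : ℝ)⁻¹ * (sepPairs C).inf' h fun p => ‖projL (C p.1) - projL (C p.2)‖ := by
  rw [eps, if_pos (sepPairs_nonempty_iff.1 h), one_div, Finset.inf'_eq_csInf_image]
  congr 2
  ext r
  simp [mem_sepPairs, eq_comm]

lemma eps_pos (hk : 0 < k) (C : Fin k → E d) : 0 < eps C := by
  by_cases h : (sepPairs C).Nonempty
  · rw [eps_eq_inf' h]
    refine mul_pos (by positivity) ((Finset.lt_inf'_iff _).2 fun p hp => ?_)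
    exact norm_pos_iff.2 (sub_ne_zero.2 (mem_sepPairs.1 hp))
  · rw [eps, if_neg (mt sepPairs_nonempty_iff.2 h)]
    exact one_pos

lemma natCast_mul_eps_le (hk : 0 < k) {C : Fin k → E d} {a b : Fin k}
    (hab : projL (C a) ≠ projL (C b)) : k * eps C ≤ ‖projL (C a) - projL (C b)‖ := by
  have hmem : (a, b) ∈ sepPairs C := mem_sepPairs.2 hab
  have hk' : (k : ℝ) ≠ 0 := by positivity
  rw [eps_eq_inf' ⟨_, hmem⟩, mul_inv_cancel_left₀ hk']
  exact (sepPairs C).inf'_le (f := fun p => ‖projL (C p.1) - projL (C p.2)‖) hmem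

lemma projL_eq_and_mul_eq_of_projL_add_shift_eq (hd : 2 ≤ d) (hk : 0 < k) {C : Fin k → E d} {t : ℝ}
    (ht : t ∈ Icc (0 : ℝ) 1) {j j' : Fin k}
    (h : projL (C j + (t * j * eps C) • e1v d hd) = projL (C j' + (t * j' * eps C) • e1v d hd)) :
    projL (C j) = projL (C j') ∧ t * j = t * j' := by
  have hε := eps_pos hk C
  rw [projL_add_smul_e1v, projL_add_smul_e1v] at h
  have hdiff : projL (C j) - projL (C j') = ((t * j' - t * j) * eps C) • e1v d hd := by
    rw [sub_mul, sub_smul, sub_eq_sub_iff_add_eq_add, h, add_comm]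
  have hproj : projL (C j) = projL (C j') := by
    by_contra hne
    have hgap := natCast_mul_eps_le hk hne
    have hj : (j : ℝ) + 1 ≤ k := by exact_mod_cast j.isLt
    have hj' : (j' : ℝ) + 1 ≤ k := by exact_mod_cast j'.isLt
    have hshift : |t * j' - t * j| ≤ k - 1 := by
      rw [← mul_sub, abs_mul, abs_of_nonneg ht.1]
      refine (mul_le_of_le_one_left (abs_nonneg _) ht.2).trans (abs_le.2 ⟨?_, ?_⟩) <;>
        linarith [(j : ℕ).cast_nonneg (α := ℝ), (j' : ℕ).cast_nonneg (α := ℝ)]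
    rw [hdiff, norm_smul, norm_e1v, mul_one, norm_mul, Real.norm_eq_abs, Real.norm_of_nonneg hε.le]
      at hgap
    nlinarith
  refine ⟨hproj, ?_⟩
  rw [hproj, sub_self, eq_comm, smul_eq_zero_iff_left (e1v_ne_zero hd)] at hdiff
  exact (sub_eq_zero.1 (mul_eq_zero.1 hdiff |>.resolve_right hε.ne')).symm

lemma injective_add_shift (hd : 2 ≤ d) (hk : 0 < k) {C : Fin k → E d} (hC : Injective C)
    {t : ℝ} (ht : t ∈ Icc (0 : ℝ) 1) :
    Injective fun j : Fin k => C j + (t * j * eps C) • e1v d hd := by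
  intro j j' h
  dsimp only at h
  rw [(projL_eq_and_mul_eq_of_projL_add_shift_eq hd hk ht (congrArg projL h)).2] at h
  exact hC (add_right_cancel h)

lemma injective_projL_add_shift_one (hd : 2 ≤ d) (hk : 0 < k) (C : Fin k → E d) :
    Injective fun j : Fin k => projL (C j + (1 * j * eps C) • e1v d hd) := by
  intro j j' h
  have := (projL_eq_and_mul_eq_of_projL_add_shift_eq hd hk ⟨zero_le_one, le_rfl⟩ h).2
  rw [one_mul, one_mul, Nat.cast_inj] at this
  exact Fin.ext this

lemma cp_eq_of_injective {C : Fin k → E d} (hC : Injective fun j => projL (C j)) : cp C = k := by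
  rw [cp, ncard_range_of_injective hC, Nat.card_eq_fintype_card, Fintype.card_fin]

lemma eventually_sepPairs_eq (C₀ : Fin k → E d) :
    ∀ᶠ C in 𝓝[{C | cp C = cp C₀}] C₀, sepPairs C = sepPairs C₀ := by
  have hopen : ∀ᶠ C in 𝓝 C₀, ∀ a b : Fin k,
      projL (C₀ a) ≠ projL (C₀ b) → projL (C a) ≠ projL (C b) := by
    refine eventually_all.2 fun a => eventually_all.2 fun b => ?_
    by_cases hab : projL (C₀ a) = projL (C₀ b)
    · exact Eventually.of_forall fun _ h => absurd hab h
    · have hcont : Continuous fun C : Fin k → E d => projL (C a) - projL (C b) := by fun_prop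
      filter_upwards [hcont.continuousAt.eventually_ne (sub_ne_zero.2 hab)] with C hC _
      exact sub_ne_zero.1 hC
  filter_upwards [nhdsWithin_le_nhds hopen, self_mem_nhdsWithin] with C hsep hcp
  have hfactor : FactorsThrough (fun a => projL (C₀ a)) fun a => projL (C a) :=
    fun a b hab => not_not.1 fun hne => hsep a b hne hab
  have hsymm := hfactor.symm_of_ncard_range_eq hcp.symm
  ext p
  rw [mem_sepPairs, mem_sepPairs]
  exact ⟨fun h h₀ => h (hsymm h₀), hsep p.1 p.2⟩

lemma continuousOn_eps (n : ℕ) : ContinuousOn (eps : (Fin k → E d) → ℝ) {C | cp C = n} := by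
  rintro C₀ rfl
  by_cases h₀ : (sepPairs C₀).Nonempty
  · have hinf : ContinuousWithinAt (fun C : Fin k → E d => (k : ℝ)⁻¹ *
        (sepPairs C₀).inf' h₀ fun p => ‖projL (C p.1) - projL (C p.2)‖) {C | cp C = cp C₀} C₀ :=
      continuousWithinAt_const.mul
        (ContinuousWithinAt.finset_inf'_apply h₀ fun p _ => by fun_prop)
    refine hinf.congr_of_eventuallyEq ?_ (eps_eq_inf' h₀)
    filter_upwards [eventually_sepPairs_eq C₀] with C hC
    rw [eps_eq_inf' (hC ▸ h₀)]
    exact congrArg _ (Finset.inf'_congr _ hC fun _ _ => rfl)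
  · have hone : ∀ C ∈ {C : Fin k → E d | cp C = cp C₀}, eps C = 1 := fun C hC => by
      rw [eps, if_neg]
      rwa [hC, ← sepPairs_nonempty_iff]
    exact continuousWithinAt_const.congr hone (hone C₀ rfl)

end Desingularization

theorem stmt7 (d k i : ℕ) (hd : 2 ≤ d) (hik : i ≤ k) :
    (∀ C ∈ Abig d k i, ∀ t ∈ Set.Icc (0 : ℝ) 1, Ddef hd i C t ∈ Conf d k) ∧
    Continuous (fun p : ↥(Abig d k i) × unitInterval =>
      Ddef hd i ((p.1 : Fin k → E d)) ((p.2 : ℝ))) ∧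
    (∀ C ∈ Abig d k i, Ddef hd i C 0 = C) ∧
    (∀ C ∈ Abig d k i, Ddef hd i C 1 ∈ Abig d k k) := by
  rcases hik.lt_or_eq with hik | rfl
  · have hk : 0 < k := by omega
    simp only [Ddef, if_pos hik]
    refine ⟨fun C hC t ht => injective_add_shift hd hk hC.1 ht, ?_, fun C _ => by simp,
      fun C hC => ⟨injective_add_shift hd hk hC.1 ⟨zero_le_one, le_rfl⟩,
        cp_eq_of_injective (injective_projL_add_shift_one hd hk C)⟩⟩
    have hC : Continuous fun p : Abig d k i × I => (p.1 : Fin k → E d) :=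
      continuous_subtype_val.comp continuous_fst
    have hε : Continuous fun p : Abig d k i × I => eps (p.1 : Fin k → E d) :=
      (continuousOn_eps i).comp_continuous hC fun p => p.1.2.2
    have ht : Continuous fun p : Abig d k i × I => (p.2 : ℝ) :=
      continuous_subtype_val.comp continuous_snd
    exact continuous_pi fun j =>
      (continuous_apply j |>.comp hC).add (((ht.mul continuous_const).mul hε).smul continuous_const)
  · have hD : ∀ C t, Ddef hd i C t = C := fun C t => if_neg (lt_irrefl i)
    exact ⟨fun C hC t _ => (hD C t).symm ▸ hC.1, by simp only [hD]; fun_prop, fun C _ => hD C 0,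
      fun C hC => (hD C 1).symm ▸ hC⟩
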